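/- Fix real numbers σ₁, σ₂, ω and J ≥ 0, and let 𝒜 : ℝ × ℝ → ℝ^{3×3} be the single resonance model matrix: the skew-symmetric matrix with entries 𝒜₁₂(θ,φ) = −σ₁, 𝒜₁₃(θ,φ) = σ₂√(2J) sin φ, 𝒜₂₃(θ,φ) = −σ₂√(2J) cos φ (and 𝒜₂₁ = −𝒜₁₂, 𝒜₃₁ = −𝒜₁₃, 𝒜₃₂ = −𝒜₂₃, zero diagonal). Then a uniform invariant frame field exists: there are a C¹ map 𝒱 : ℝ × ℝ → SO(3), 2π-periodic in θ and in φ, and a constant ν ∈ [0,1) with 𝒟𝒱 = 𝒜𝒱 − ν𝒱𝒥, where 𝒟 = ∂_θ + ω∂_φ; moreover ν can be taken to be the fractional part of σ := √((σ₁−ω)² + 2σ₂²J). -/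

import Mathlib

open MeasureTheory Filter
noncomputable section

/-- The matrix 𝒥: (2,1)-entry 1, (1,2)-entry −1, all other entries 0. -/
def Jmat : Matrix (Fin 3) (Fin 3) ℝ := Matrix.of ![![0, -1, 0], ![1, 0, 0], ![0, 0, 0]]

/-- The special orthogonal group SO(3): RᵀR = I and det R = 1. -/
def SO3 : Set (Matrix (Fin 3) (Fin 3) ℝ) := {R | R.transpose * R = 1 ∧ R.det = 1}

/-- 2π-periodicity in each of the k arguments. -/
def Periodic2Pi {k : ℕ} {E : Type*} (F : (Fin k → ℝ) → E) : Prop :=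
  ∀ (z : Fin k → ℝ) (i : Fin k), F (Function.update z i (z i + 2 * Real.pi)) = F z

/-- `f : ℝ → E` is quasiperiodic with tune vector `ν ∈ ℝ^k` if `f θ = F (νθ)` for a
continuous `F` that is 2π-periodic in each argument. -/
def IsQuasiperiodic {E : Type*} [TopologicalSpace E] {k : ℕ} (ν : Fin k → ℝ) (f : ℝ → E) : Prop :=
  ∃ F : (Fin k → ℝ) → E, Continuous F ∧ Periodic2Pi F ∧ ∀ θ : ℝ, f θ = F fun i => ν i * θ

/-- integer dot product `m · v` -/
def zdot {k : ℕ} (m : Fin k → ℤ) (v : Fin k → ℝ) : ℝ := ∑ i, (m i : ℝ) * v i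

/-- `ν` is nonresonant if `m · ν = 0` only for `m = 0`. -/
def Nonresonant {k : ℕ} (ν : Fin k → ℝ) : Prop :=
  ∀ m : Fin k → ℤ, zdot m ν = 0 → m = 0

/-- Fourier coefficient `F_m = (2π)^{-k} ∫_{[0,2π]^k} F(z) e^{-i m·z} dz`. -/
def mFourierCoeff {k : ℕ} (F : (Fin k → ℝ) → ℂ) (m : Fin k → ℤ) : ℂ :=
  ((2 * Real.pi) ^ k : ℝ)⁻¹ •
    ∫ z in Set.Icc (0 : Fin k → ℝ) (fun _ => 2 * Real.pi),
      F z * Complex.exp (-Complex.I * ∑ i, (m i : ℝ) * z i)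

/-- The phase space `ℝ × ℝ^d` of pairs `(θ, φ)`. -/
abbrev Pt (d : ℕ) := ℝ × (Fin d → ℝ)

/-- The vector `(1, ω) ∈ ℝ^{d+1}`. -/
def oneOmega {d : ℕ} (ω : Fin d → ℝ) : Fin (d + 1) → ℝ := Fin.cons 1 ω

/-- max norm `‖m‖ = max_i |m_i|` of an integer vector. -/
def intNorm {k : ℕ} (m : Fin k → ℤ) : ℕ := Finset.univ.sup fun i => (m i).natAbs

/-- The Diophantine set `Ω(τ) = ⋃_{γ ∈ (0,1]} Ω(τ,γ)` where
`Ω(τ,γ) = {ω : |m·(1,ω)| ≥ γ‖m‖^{-τ} for all nonzero m ∈ ℤ^{d+1}}`. -/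
def DiophSet (d : ℕ) (τ : ℝ) : Set (Fin d → ℝ) :=
  ⋃ γ ∈ Set.Ioc (0 : ℝ) 1,
    {ω | ∀ m : Fin (d + 1) → ℤ, m ≠ 0 → γ * (intNorm m : ℝ) ^ (-τ) ≤ |zdot m (oneOmega ω)|}

/-- The derivation 𝒟 applied to the entries of a matrix-valued function:
`(𝒟V)(p) = ∂_θ V + ω·∇_φ V`, i.e. the directional derivative along `(1, ω)`. -/
def Dmat {d : ℕ} (ω : Fin d → ℝ) (V : Pt d → Matrix (Fin 3) (Fin 3) ℝ) (p : Pt d) :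
    Matrix (Fin 3) (Fin 3) ℝ :=
  Matrix.of fun i j => fderiv ℝ (fun q => V q i j) p (1, ω)

/-- Periodicity: 2π-periodic in θ and in each component of φ. -/
def PeriodicPt {d : ℕ} {E : Type*} (f : Pt d → E) : Prop :=
  (∀ p : Pt d, f (p.1 + 2 * Real.pi, p.2) = f p) ∧
  (∀ (p : Pt d) (i : Fin d), f (p.1, Function.update p.2 i (p.2 i + 2 * Real.pi)) = f p)

/-- A matrix-valued map on `ℝ × ℝ^d` is of class `C^n` (entrywise). -/
def SmoothMat {d : ℕ} (n : ℕ∞) (V : Pt d → Matrix (Fin 3) (Fin 3) ℝ) : Prop :=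
  ∀ i j, ContDiff ℝ n fun p => V p i j

/-- `Φ` is the principal solution matrix at `φ₀`:
`∂_θ Φ(θ) = 𝒜(θ, ωθ + φ₀) Φ(θ)`, `Φ(0) = I`. -/
def IsPrincipalSolution {d : ℕ} (ω : Fin d → ℝ) (𝒜 : Pt d → Matrix (Fin 3) (Fin 3) ℝ)
    (φ₀ : Fin d → ℝ) (Φ : ℝ → Matrix (Fin 3) (Fin 3) ℝ) : Prop :=
  Φ 0 = 1 ∧ ∀ (θ : ℝ) (i j : Fin 3),
    HasDerivAt (fun t => Φ t i j) ((𝒜 (θ, fun l => ω l * θ + φ₀ l) * Φ θ) i j) θ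

/-- A uniform invariant frame field: C¹, 2π-periodic, SO(3)-valued, satisfying
`𝒟𝒱 = 𝒜𝒱 − ν𝒱𝒥` for a constant `ν ∈ [0,1)`. -/
def IsUniformIFF {d : ℕ} (ω : Fin d → ℝ) (𝒜 V : Pt d → Matrix (Fin 3) (Fin 3) ℝ) (ν : ℝ) :
    Prop :=
  SmoothMat 1 V ∧ PeriodicPt V ∧ (∀ p, V p ∈ SO3) ∧ ν ∈ Set.Ico (0 : ℝ) 1 ∧
  ∀ p, Dmat ω V p = 𝒜 p * V p - ν • (V p * Jmat)

/-- An invariant frame field: C¹, 2π-periodic, SO(3)-valued, whose third column 𝔳³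
satisfies `𝒟𝔳³ = 𝒜𝔳³`. -/
def IsIFF {d : ℕ} (ω : Fin d → ℝ) (𝒜 V : Pt d → Matrix (Fin 3) (Fin 3) ℝ) : Prop :=
  SmoothMat 1 V ∧ PeriodicPt V ∧ (∀ p, V p ∈ SO3) ∧
  ∀ (p : Pt d) (i : Fin 3),
    fderiv ℝ (fun q => V q i 2) p (1, ω) = ((𝒜 p).mulVec fun j => V p j 2) i

/-- An invariant spin field: C¹, 2π-periodic, unit length, satisfying `𝒟n = 𝒜n`. -/
def IsISF {d : ℕ} (ω : Fin d → ℝ) (𝒜 : Pt d → Matrix (Fin 3) (Fin 3) ℝ)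
    (n : Pt d → Fin 3 → ℝ) : Prop :=
  (∀ i, ContDiff ℝ 1 fun p => n p i) ∧ PeriodicPt n ∧ (∀ p, ∑ i, n p i ^ 2 = 1) ∧
  ∀ (p : Pt d) (i : Fin 3), fderiv ℝ (fun q => n q i) p (1, ω) = ((𝒜 p).mulVec (n p)) i

/-- cross product on ℝ³ -/
def cross3 (u v : Fin 3 → ℝ) : Fin 3 → ℝ :=
  ![u 1 * v 2 - u 2 * v 1, u 2 * v 0 - u 0 * v 2, u 0 * v 1 - u 1 * v 0]

/-- Euclidean norm on ℝ³ -/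
def nrm3 (v : Fin 3 → ℝ) : ℝ := Real.sqrt (∑ i, v i ^ 2)

/-- normalization of a vector in ℝ³ -/
def unitize (v : Fin 3 → ℝ) : Fin 3 → ℝ := fun i => v i / nrm3 v

/-- the matrix with columns a, b, c -/
def colMat (a b c : Fin 3 → ℝ) : Matrix (Fin 3) (Fin 3) ℝ := (Matrix.of ![a, b, c]).transpose

/-!
Conjugation by the rotation `R(φ)` about the third axis, whose generator is `𝒥`, turns `𝒜(θ, φ)`
into the constant matrix `𝒜₀ = 𝒜(0, 0)`. Now `𝒜₀ - ω𝒥` is the cross-product matrix of the vector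
`(σ₂√(2J), 0, σ₁ - ω)`, of length `σ`, so `𝒜₀ - ω𝒥 = σ P𝒥Pᵀ` for a rotation `P` about the second
axis. Hence for every integer `k` the frame `𝒱(θ, φ) = R(φ) P R(kθ)` satisfies
`𝒟𝒱 = 𝒜𝒱 - (σ - k)𝒱𝒥`; it is `2π`-periodic in `θ` because `k` is an integer, and `k = ⌊σ⌋`
gives `ν = fract σ`.
-/

def rotZ (t : ℝ) : Matrix (Fin 3) (Fin 3) ℝ :=
  Matrix.of ![![Real.cos t, -Real.sin t, 0], ![Real.sin t, Real.cos t, 0], ![0, 0, 1]]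

def rotY (c s : ℝ) : Matrix (Fin 3) (Fin 3) ℝ :=
  Matrix.of ![![c, 0, s], ![0, 1, 0], ![-s, 0, c]]

/-- `𝒜(θ, φ)`, with `b = σ₂ √(2J)`. -/
def singleResonanceMat (σ₁ b φ : ℝ) : Matrix (Fin 3) (Fin 3) ℝ :=
  Matrix.of ![![0, -σ₁, b * Real.sin φ], ![σ₁, 0, -(b * Real.cos φ)],
    ![-(b * Real.sin φ), b * Real.cos φ, 0]]

def HasMatrixDerivAt {m n : Type*} (F : ℝ → Matrix m n ℝ) (F' : Matrix m n ℝ) (t : ℝ) : Prop :=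
  ∀ i j, HasDerivAt (fun s => F s i j) (F' i j) t

theorem SO3_mul_mem {A B : Matrix (Fin 3) (Fin 3) ℝ} (hA : A ∈ SO3) (hB : B ∈ SO3) :
    A * B ∈ SO3 := by
  refine ⟨?_, by rw [Matrix.det_mul, hA.2, hB.2, one_mul]⟩
  rw [Matrix.transpose_mul, Matrix.mul_assoc, ← Matrix.mul_assoc A.transpose, hA.1,
    Matrix.one_mul, hB.1]

theorem rotZ_mem_SO3 (t : ℝ) : rotZ t ∈ SO3 := by
  have h := Real.sin_sq_add_cos_sq t
  constructor
  · ext i j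
    fin_cases i <;> fin_cases j <;>
      simp [rotZ, Matrix.mul_apply, Fin.sum_univ_three] <;> grind
  · simp [Matrix.det_fin_three, rotZ]
    grind

theorem rotY_mem_SO3 {c s : ℝ} (h : c ^ 2 + s ^ 2 = 1) : rotY c s ∈ SO3 := by
  constructor
  · ext i j
    fin_cases i <;> fin_cases j <;>
      simp [rotY, Matrix.mul_apply, Fin.sum_univ_three] <;> grind
  · simp [Matrix.det_fin_three, rotY]
    grind

theorem rotZ_periodic : Function.Periodic rotZ (2 * Real.pi) := by
  intro t
  simp [rotZ]

theorem Jmat_mul_rotZ (t : ℝ) : Jmat * rotZ t = rotZ t * Jmat := by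
  ext i j
  fin_cases i <;> fin_cases j <;> simp [rotZ, Jmat, Matrix.mul_apply, Fin.sum_univ_three]

theorem singleResonanceMat_mul_rotZ (σ₁ b φ : ℝ) :
    singleResonanceMat σ₁ b φ * rotZ φ = rotZ φ * singleResonanceMat σ₁ b 0 := by
  have h := Real.sin_sq_add_cos_sq φ
  ext i j
  fin_cases i <;> fin_cases j <;>
    simp [singleResonanceMat, rotZ, Matrix.mul_apply, Fin.sum_univ_three] <;>
    grind

theorem singleResonanceMat_zero_mul_rotY {σ₁ b ω σ c s : ℝ} (hcs : c ^ 2 + s ^ 2 = 1)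
    (hc : σ * c = σ₁ - ω) (hs : σ * s = b) :
    singleResonanceMat σ₁ b 0 * rotY c s = ω • (Jmat * rotY c s) + σ • (rotY c s * Jmat) := by
  ext i j
  fin_cases i <;> fin_cases j <;>
    simp [singleResonanceMat, rotY, Jmat, Matrix.mul_apply, Fin.sum_univ_three] <;>
    grind

section MatrixDeriv

variable {l m n : Type*} {t : ℝ}

theorem hasMatrixDerivAt_const (A : Matrix m n ℝ) : HasMatrixDerivAt (fun _ => A) 0 t :=
  fun _ _ => hasDerivAt_const t _

theorem HasMatrixDerivAt.mul [Fintype m] {F : ℝ → Matrix l m ℝ} {G : ℝ → Matrix m n ℝ}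
    {F' : Matrix l m ℝ} {G' : Matrix m n ℝ}
    (hF : HasMatrixDerivAt F F' t) (hG : HasMatrixDerivAt G G' t) :
    HasMatrixDerivAt (fun s => F s * G s) (F' * G t + F t * G') t := by
  intro i j
  simp only [Matrix.add_apply, Matrix.mul_apply, ← Finset.sum_add_distrib]
  exact HasDerivAt.fun_sum fun k _ => by simpa only [add_comm] using (hF i k).fun_mul (hG k j)

end MatrixDeriv

theorem HasDerivAt.hasMatrixDerivAt_rotZ {f : ℝ → ℝ} {f' t : ℝ} (hf : HasDerivAt f f' t) :
    HasMatrixDerivAt (fun s => rotZ (f s)) (f' • (Jmat * rotZ (f t))) t := by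
  intro i j
  fin_cases i <;> fin_cases j <;> simp [rotZ, Jmat]
  all_goals first
    | exact hasDerivAt_const t _
    | simpa [mul_comm] using hf.cos
    | simpa [mul_comm] using hf.sin
    | simpa [mul_comm] using hf.sin.fun_neg

theorem SmoothMat.mul {d : ℕ} {n : ℕ∞} {A B : Pt d → Matrix (Fin 3) (Fin 3) ℝ}
    (hA : SmoothMat n A) (hB : SmoothMat n B) : SmoothMat n fun p => A p * B p := by
  intro i j
  simp only [Matrix.mul_apply]
  exact ContDiff.sum fun k _ => (hA i k).mul (hB k j)

theorem smoothMat_const {d : ℕ} {n : ℕ∞} (A : Matrix (Fin 3) (Fin 3) ℝ) :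
    SmoothMat (d := d) n fun _ => A :=
  fun _ _ => contDiff_const

theorem ContDiff.smoothMat_rotZ {d : ℕ} {n : ℕ∞} {f : Pt d → ℝ} (hf : ContDiff ℝ n f) :
    SmoothMat n fun p => rotZ (f p) := by
  intro i j
  fin_cases i <;> fin_cases j <;> simp [rotZ] <;> fun_prop

theorem exists_polar_coords (x y : ℝ) :
    ∃ c s : ℝ, c ^ 2 + s ^ 2 = 1 ∧ √(x ^ 2 + y ^ 2) * c = x ∧ √(x ^ 2 + y ^ 2) * s = y := by
  refine ⟨Real.cos (x + y * Complex.I).arg, Real.sin (x + y * Complex.I).arg,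
    by rw [add_comm]; exact Real.sin_sq_add_cos_sq _, ?_, ?_⟩
  · simpa [Complex.norm_add_mul_I] using Complex.norm_mul_cos_arg (x + y * Complex.I)
  · simpa [Complex.norm_add_mul_I] using Complex.norm_mul_sin_arg (x + y * Complex.I)

def rotFrame (c s : ℝ) (k : ℤ) (p : Pt 1) : Matrix (Fin 3) (Fin 3) ℝ :=
  rotZ (p.2 0) * rotY c s * rotZ (k * p.1)

section rotFrame

variable {c s : ℝ} {k : ℤ}

theorem smoothMat_rotFrame (n : ℕ∞) : SmoothMat n (rotFrame c s k) :=
  ((ContDiff.smoothMat_rotZ (by fun_prop)).mul (smoothMat_const _)).mul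
    (ContDiff.smoothMat_rotZ (by fun_prop))

theorem periodicPt_rotFrame : PeriodicPt (rotFrame c s k) := by
  refine ⟨fun p => ?_, fun p i => ?_⟩
  · simp only [rotFrame, mul_add, (rotZ_periodic.int_mul k) _]
  · simp only [rotFrame, Subsingleton.elim i 0, Function.update_self, rotZ_periodic _]

theorem rotFrame_mem_SO3 (h : c ^ 2 + s ^ 2 = 1) (p : Pt 1) : rotFrame c s k p ∈ SO3 :=
  SO3_mul_mem (SO3_mul_mem (rotZ_mem_SO3 _) (rotY_mem_SO3 h)) (rotZ_mem_SO3 _)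

theorem Dmat_rotFrame (ω : ℝ) (p : Pt 1) :
    Dmat (fun _ => ω) (rotFrame c s k) p
      = ω • (Jmat * rotFrame c s k p) + (k : ℝ) • (rotFrame c s k p * Jmat) := by
  have hline : (fun t : ℝ => rotFrame c s k (p + t • (1, fun _ => ω)))
      = fun t => rotZ (p.2 0 + ω * t) * rotY c s * rotZ (k * (p.1 + t)) := by
    funext t
    simp [rotFrame, mul_comm ω]
  have hderiv : HasMatrixDerivAt (fun t : ℝ => rotFrame c s k (p + t • (1, fun _ => ω)))
      (ω • (Jmat * rotFrame c s k p) + (k : ℝ) • (rotFrame c s k p * Jmat)) 0 := by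
    rw [hline]
    convert ((((hasDerivAt_id' (0 : ℝ)).const_mul ω).const_add (p.2 0)).hasMatrixDerivAt_rotZ.mul
      (hasMatrixDerivAt_const (rotY c s))).mul
      (((hasDerivAt_id' (0 : ℝ)).const_add p.1).const_mul (k : ℝ)).hasMatrixDerivAt_rotZ
      using 1
    simp [rotFrame, Matrix.mul_assoc, ← Jmat_mul_rotZ]
  ext i j
  rw [Dmat, Matrix.of_apply,
    ← ((smoothMat_rotFrame 1 i j).differentiable one_ne_zero _).lineDeriv_eq_fderiv]
  exact HasLineDerivAt.lineDeriv (hderiv i j)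

end rotFrame

theorem singleResonanceMat_mul_rotFrame {σ₁ b ω σ c s : ℝ} (hcs : c ^ 2 + s ^ 2 = 1)
    (hc : σ * c = σ₁ - ω) (hs : σ * s = b) (k : ℤ) (p : Pt 1) :
    singleResonanceMat σ₁ b (p.2 0) * rotFrame c s k p
      = ω • (Jmat * rotFrame c s k p) + σ • (rotFrame c s k p * Jmat) := by
  calc singleResonanceMat σ₁ b (p.2 0) * rotFrame c s k p
      = rotZ (p.2 0) * (singleResonanceMat σ₁ b 0 * rotY c s) * rotZ (k * p.1) := by
        simp only [rotFrame, ← Matrix.mul_assoc, singleResonanceMat_mul_rotZ]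
    _ = rotZ (p.2 0) * (ω • (Jmat * rotY c s) + σ • (rotY c s * Jmat)) * rotZ (k * p.1) := by
        rw [singleResonanceMat_zero_mul_rotY hcs hc hs]
    _ = ω • (Jmat * rotFrame c s k p) + σ • (rotFrame c s k p * Jmat) := by
        simp only [rotFrame, Matrix.mul_add, Matrix.add_mul, Matrix.mul_smul, Matrix.smul_mul,
          Matrix.mul_assoc]
        rw [Jmat_mul_rotZ (k * p.1), ← Matrix.mul_assoc Jmat (rotZ (p.2 0)), Jmat_mul_rotZ,
          Matrix.mul_assoc]

/-- Proposition 7.1, the single resonance model is well-tuned. -/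
theorem single_resonance_model_uniform_IFF (σ₁ σ₂ ω J : ℝ) (hJ : 0 ≤ J) :
    ∃ 𝒱 : Pt 1 → Matrix (Fin 3) (Fin 3) ℝ,
      IsUniformIFF (fun _ : Fin 1 => ω)
        (fun p => Matrix.of
          ![![0, -σ₁, σ₂ * Real.sqrt (2 * J) * Real.sin (p.2 0)],
            ![σ₁, 0, -(σ₂ * Real.sqrt (2 * J) * Real.cos (p.2 0))],
            ![-(σ₂ * Real.sqrt (2 * J) * Real.sin (p.2 0)),
              σ₂ * Real.sqrt (2 * J) * Real.cos (p.2 0), 0]])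
        𝒱 (Int.fract (Real.sqrt ((σ₁ - ω) ^ 2 + 2 * σ₂ ^ 2 * J))) := by
  obtain ⟨c, s, hcs, hc, hs⟩ := exists_polar_coords (σ₁ - ω) (σ₂ * √(2 * J))
  have hσ : (σ₂ * √(2 * J)) ^ 2 = 2 * σ₂ ^ 2 * J := by
    rw [mul_pow, Real.sq_sqrt (by positivity)]
    ring
  rw [hσ] at hc hs
  set σ := √((σ₁ - ω) ^ 2 + 2 * σ₂ ^ 2 * J)
  refine ⟨rotFrame c s ⌊σ⌋, smoothMat_rotFrame 1, periodicPt_rotFrame,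
    rotFrame_mem_SO3 hcs, ⟨Int.fract_nonneg σ, Int.fract_lt_one σ⟩, fun p => ?_⟩
  change _ = singleResonanceMat σ₁ (σ₂ * √(2 * J)) (p.2 0) * _ - _
  rw [Dmat_rotFrame, singleResonanceMat_mul_rotFrame hcs hc hs, ← Int.self_sub_floor, sub_smul]
  abel
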